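/- For every a ∈ ℝ, the matrix 𝒰₃(a) = 𝒰₃ ∘ exp{iR(a)} (entrywise product, entrywise exponential) is, after rescaling by 6, a complex Hadamard matrix of order 36; here R(a) is the real matrix of order 36 whose rows number 2, 14 and 26 (1-indexed) equal the pattern [0,a,0,0,a,0, 0,0,a,0,0,a, a,0,0,a,0,0, 0,a,0,0,a,0, 0,0,a,0,0,a, a,0,0,a,0,0] and all of whose other entries are 0. In other words, 𝒰₃ admits a one-parameter affine family of complex Hadamard matrices. -/

import Mathlib

open Matrix Complex BigOperators

noncomputable section

/-- Reshuffling: `X^R_{(j,k),(l,m)} = X_{(j,l),(k,m)}`. -/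
def reshuffle {d : ℕ} (X : Matrix (Fin d × Fin d) (Fin d × Fin d) ℂ) :
    Matrix (Fin d × Fin d) (Fin d × Fin d) ℂ :=
  fun p q => X (p.1, q.1) (p.2, q.2)

/-- Partial transpose: `X^Γ_{(j,k),(l,m)} = X_{(j,m),(l,k)}`. -/
def ptranspose {d : ℕ} (X : Matrix (Fin d × Fin d) (Fin d × Fin d) ℂ) :
    Matrix (Fin d × Fin d) (Fin d × Fin d) ℂ :=
  fun p q => X (p.1, q.2) (q.1, p.2)

def IsUnitary {n : Type*} [Fintype n] [DecidableEq n] (M : Matrix n n ℂ) : Prop :=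
  M ∈ Matrix.unitaryGroup n ℂ

/-- Kronecker product with index convention `(V⊗W)_{(j,k),(l,m)} = V_{jl} W_{km}`. -/
def kron {d : ℕ} (A B : Matrix (Fin d) (Fin d) ℂ) :
    Matrix (Fin d × Fin d) (Fin d × Fin d) ℂ :=
  fun p q => A p.1 q.1 * B p.2 q.2

/-- The unitary Fourier matrix of order six, `(F₆)_{jk} = ω^{jk}/√6` with `ω = exp(2πi/6)`. -/
def F6 : Matrix (Fin 6) (Fin 6) ℂ :=
  fun j k => Complex.exp (2 * (Real.pi : ℂ) * Complex.I * (j.val : ℂ) * (k.val : ℂ) / 6) /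
    (Real.sqrt 6 : ℂ)

/-- The cyclic shift on ℂ⁶: `X|j⟩ = |j+1 mod 6⟩`. -/
def Xshift : Matrix (Fin 6) (Fin 6) ℂ := fun j k => if j = k + 1 then 1 else 0

/-- The generalized CNOT permutation `P = Σ_j |j⟩⟨j| ⊗ X^j` of order 36. -/
def Pcnot : Matrix (Fin 6 × Fin 6) (Fin 6 × Fin 6) ℂ :=
  fun p q => if p.1 = q.1 then (Xshift ^ (p.1 : ℕ)) p.2 q.2 else 0

def Kmat : Matrix (Fin 6 × Fin 6) (Fin 6 × Fin 6) ℂ := kron F6 1 * Pcnot * kron F6 1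

def Lmat : Matrix (Fin 6 × Fin 6) (Fin 6 × Fin 6) ℂ := kron F6 1 * Pcnot * kron F6ᴴ 1

/-- Index of the pair `(j,k)` in the vector of length 36 (row-major order). -/
def idx (p : Fin 6 × Fin 6) : ℕ := 6 * p.1.val + p.2.val

def Λ₁ (p : Fin 6 × Fin 6) : ℝ :=
  ([0,1,0,1,3,3,3,3,1,5,2,4,2,1,3,1,2,3,1,1,2,0,3,5,5,3,2,3,2,5,4,4,1,5,5,1] :
    List ℝ).getD (idx p) 0 / 6

def Λ₂ (p : Fin 6 × Fin 6) : ℝ :=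
  ([0,2,3,3,2,0,0,3,2,2,0,4,2,0,3,5,0,0,0,5,0,0,2,0,2,2,5,3,2,4,2,3,0,2,0,0] :
    List ℝ).getD (idx p) 0 / 6

def Λ₃ (p : Fin 6 × Fin 6) : ℝ :=
  ([0,2,2,0,0,1,0,1,1,1,2,1,0,2,0,2,2,2,2,0,2,2,2,1,1,1,2,0,2,2,0,1,2,2,1,0] :
    List ℝ).getD (idx p) 0 / 3

/-- `𝒰_j = K · diag(exp{2πiΛ}) · L`. -/
def Umat (Λ : Fin 6 × Fin 6 → ℝ) : Matrix (Fin 6 × Fin 6) (Fin 6 × Fin 6) ℂ :=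
  Kmat * Matrix.diagonal (fun p => Complex.exp (2 * (Real.pi : ℂ) * Complex.I * (Λ p : ℂ))) * Lmat

/-- The 0-1 pattern of the affected rows of `R(a)`:
`[0,a,0,0,a,0, 0,0,a,0,0,a, a,0,0,a,0,0, 0,a,0,0,a,0, 0,0,a,0,0,a, a,0,0,a,0,0]`. -/
def patRow : List ℝ :=
  [0,1,0,0,1,0, 0,0,1,0,0,1, 1,0,0,1,0,0, 0,1,0,0,1,0, 0,0,1,0,0,1, 1,0,0,1,0,0]

/-- The matrix `R(a)` of free phases: rows number 2, 14 and 26 (1-indexed, i.e.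
indices 1, 13, 25) carry the pattern `a·patRow`, all other entries vanish. -/
def Rmat (a : ℝ) : Matrix (Fin 6 × Fin 6) (Fin 6 × Fin 6) ℝ :=
  fun p q => if idx p = 1 ∨ idx p = 13 ∨ idx p = 25 then a * patRow.getD (idx q) 0 else 0

/-- The one-parameter affine deformation `𝒰₃(a) = 𝒰₃ ∘ exp{iR(a)}` (entrywise). -/
def U3fam (a : ℝ) : Matrix (Fin 6 × Fin 6) (Fin 6 × Fin 6) ℂ :=
  fun p q => Umat Λ₃ p q * Complex.exp (Complex.I * (Rmat a p q : ℂ))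



/-! ### Auxiliary development -/

/-- The primitive sixth root of unity `ζ = exp(2πi/6)`. -/
def zeta : ℂ := Complex.exp (2 * (Real.pi : ℂ) * Complex.I / 6)

lemma zeta_form : zeta = (1 + (Real.sqrt 3 : ℂ) * Complex.I) / 2 := by
  have h : (2 * (Real.pi : ℂ) * Complex.I / 6) = ((Real.pi/3 : ℝ) : ℂ) * Complex.I := by
    push_cast; ring
  rw [zeta, h, Complex.exp_mul_I, ← Complex.ofReal_cos, ← Complex.ofReal_sin]
  rw [Real.cos_pi_div_three, Real.sin_pi_div_three]
  push_cast; ring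

lemma s3_sq : ((Real.sqrt 3 : ℝ) : ℂ)^2 = 3 := by
  norm_cast; rw [Real.sq_sqrt]; norm_num

lemma zeta_sq : zeta^2 = zeta - 1 := by
  rw [zeta_form]
  linear_combination (Complex.I^2/4) * s3_sq + (3/4 : ℂ) * Complex.I_sq

lemma zeta_cube : zeta^3 = -1 := by linear_combination (zeta + 1) * zeta_sq
lemma zeta_pow_six : zeta^6 = 1 := by linear_combination (zeta^3 - 1) * zeta_cube
lemma zeta_five : zeta^5 = 1 - zeta := by linear_combination (zeta^3 + zeta^2 - 1) * zeta_sq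

lemma zeta_pow_mod (n : ℕ) : zeta ^ n = zeta ^ (n % 6) := by
  conv_lhs => rw [← Nat.div_add_mod n 6]
  rw [pow_add, pow_mul, zeta_pow_six, one_pow, one_mul]

lemma conj_zeta : (starRingEnd ℂ) zeta = zeta^5 := by
  rw [zeta_five, zeta_form]
  simp only [map_div₀, _root_.map_add, _root_.map_mul, _root_.map_one, _root_.map_ofNat,
    Complex.conj_I, Complex.conj_ofReal]
  ring

lemma abs_zeta : ‖zeta‖ = 1 := by
  rw [zeta, Complex.norm_exp]
  norm_num [Complex.div_re, Complex.mul_re, Complex.mul_im]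

/-- Integer model of the additive subgroup `ℤ + ℤζ ⊆ ℂ`. -/
structure Zz where
  a : ℤ
  b : ℤ
deriving DecidableEq

namespace Zz
def add' (x y : Zz) : Zz := ⟨x.a + y.a, x.b + y.b⟩
instance : Add Zz := ⟨add'⟩
instance : Zero Zz := ⟨⟨0, 0⟩⟩
lemma add_def (x y : Zz) : x + y = ⟨x.a + y.a, x.b + y.b⟩ := rfl
lemma zero_def : (0 : Zz) = ⟨0, 0⟩ := rfl

instance : AddCommMonoid Zz where
  add_assoc x y z := by simp only [add_def, Zz.mk.injEq]; constructor <;> ring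
  zero_add x := by simp [add_def, zero_def]
  add_zero x := by simp [add_def, zero_def]
  add_comm x y := by simp only [add_def, Zz.mk.injEq]; constructor <;> ring
  nsmul := nsmulRec
end Zz

/-- Realization map `Zz → ℂ`, `⟨a,b⟩ ↦ a + bζ`. -/
def phi (x : Zz) : ℂ := (x.a : ℂ) + (x.b : ℂ) * zeta

def phiHom : Zz →+ ℂ :=
  AddMonoidHom.mk' phi (by
    intro x y
    simp only [phi, Zz.add_def]
    push_cast
    ring)

lemma phi_add (x y : Zz) : phi (x + y) = phi x + phi y := by
  simp only [phi, Zz.add_def]; push_cast; ring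

lemma phi_sum {α : Type*} (s : Finset α) (f : α → Zz) :
    phi (∑ x ∈ s, f x) = ∑ x ∈ s, phi (f x) := map_sum phiHom f s

/-- ζ-power as an element of `Zz`, using `ζ² = ζ - 1`. -/
def zp (n : ℕ) : Zz :=
  match n % 6 with
  | 0 => ⟨1, 0⟩
  | 1 => ⟨0, 1⟩
  | 2 => ⟨-1, 1⟩
  | 3 => ⟨-1, 0⟩
  | 4 => ⟨0, -1⟩
  | _ => ⟨1, -1⟩

lemma phi_zp (n : ℕ) : phi (zp n) = zeta ^ n := by
  rw [zeta_pow_mod, zp]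
  obtain h | h | h | h | h | h :
      n % 6 = 0 ∨ n % 6 = 1 ∨ n % 6 = 2 ∨ n % 6 = 3 ∨ n % 6 = 4 ∨ n % 6 = 5 := by omega
  all_goals rw [h]; simp only [phi]; push_cast
  · ring
  · ring
  · linear_combination - zeta_sq
  · linear_combination - zeta_cube
  · linear_combination - zeta * zeta_cube
  · linear_combination - zeta_five

def Etab : List (List ℕ) :=
  [[4, 1, 0, 5, 4, 1, 1, 4, 5, 0, 1, 0, 0, 3, 2, 1, 0, 3, 5, 2, 3, 4, 5, 4, 0, 3, 2, 1, 0, 3, 1, 4, 5, 0, 1, 0],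
   [1, 4, 1, 0, 5, 4, 1, 2, 5, 0, 1, 2, 5, 2, 5, 4, 3, 2, 1, 2, 5, 0, 1, 2, 1, 4, 1, 0, 5, 4, 5, 0, 3, 4, 5, 0],
   [4, 1, 4, 1, 0, 5, 3, 2, 3, 0, 1, 2, 4, 1, 4, 1, 0, 5, 5, 4, 5, 2, 3, 4, 2, 5, 2, 5, 4, 3, 5, 4, 5, 2, 3, 4],
   [5, 4, 1, 4, 1, 0, 3, 4, 3, 4, 1, 2, 1, 0, 3, 0, 3, 2, 1, 2, 1, 2, 5, 0, 1, 0, 3, 0, 3, 2, 3, 4, 3, 4, 1, 2],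
   [0, 5, 4, 1, 4, 1, 3, 4, 5, 4, 5, 2, 4, 3, 2, 5, 2, 5, 3, 4, 5, 4, 5, 2, 0, 5, 4, 1, 4, 1, 1, 2, 3, 2, 3, 0],
   [1, 0, 5, 4, 1, 4, 3, 4, 5, 0, 5, 0, 1, 0, 5, 4, 1, 4, 5, 0, 1, 2, 1, 2, 5, 4, 3, 2, 5, 2, 5, 0, 1, 2, 1, 2],
   [1, 3, 3, 3, 3, 1, 0, 2, 0, 4, 2, 4, 5, 1, 1, 1, 1, 5, 0, 2, 0, 4, 2, 4, 1, 3, 3, 3, 3, 1, 4, 0, 4, 2, 0, 2],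
   [2, 2, 4, 4, 4, 4, 0, 2, 4, 2, 0, 4, 2, 2, 4, 4, 4, 4, 2, 4, 0, 4, 2, 0, 0, 0, 2, 2, 2, 2, 2, 4, 0, 4, 2, 0],
   [5, 3, 3, 5, 5, 5, 0, 2, 4, 0, 4, 2, 1, 5, 5, 1, 1, 1, 4, 0, 2, 4, 2, 0, 1, 5, 5, 1, 1, 1, 0, 2, 4, 0, 4, 2],
   [0, 0, 4, 4, 0, 0, 4, 2, 4, 0, 2, 0, 4, 4, 2, 2, 4, 4, 4, 2, 4, 0, 2, 0, 0, 0, 4, 4, 0, 0, 2, 0, 2, 4, 0, 4],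
   [1, 1, 1, 5, 5, 1, 2, 0, 4, 0, 2, 4, 1, 1, 1, 5, 5, 1, 4, 2, 0, 2, 4, 0, 5, 5, 5, 3, 3, 5, 4, 2, 0, 2, 4, 0],
   [2, 2, 2, 2, 0, 0, 0, 4, 2, 0, 2, 4, 4, 4, 4, 4, 2, 2, 4, 2, 0, 4, 0, 2, 4, 4, 4, 4, 2, 2, 0, 4, 2, 0, 2, 4],
   [0, 1, 4, 1, 4, 5, 5, 0, 5, 4, 3, 0, 0, 1, 4, 1, 4, 5, 1, 2, 1, 0, 5, 2, 4, 5, 2, 5, 2, 3, 1, 2, 1, 0, 5, 2],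
   [1, 2, 3, 0, 3, 0, 3, 2, 3, 2, 1, 0, 3, 4, 5, 2, 5, 2, 1, 0, 1, 0, 5, 4, 3, 4, 5, 2, 5, 2, 3, 2, 3, 2, 1, 0],
   [2, 3, 4, 5, 2, 5, 3, 0, 5, 0, 5, 4, 0, 1, 2, 3, 0, 3, 3, 0, 5, 0, 5, 4, 2, 3, 4, 5, 2, 5, 1, 4, 3, 4, 3, 2],
   [1, 4, 5, 0, 1, 4, 1, 0, 3, 2, 3, 2, 1, 4, 5, 0, 1, 4, 3, 2, 5, 4, 5, 4, 5, 2, 3, 4, 5, 2, 3, 2, 5, 4, 5, 4],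
   [0, 3, 0, 1, 2, 3, 5, 4, 3, 0, 5, 0, 2, 5, 2, 3, 4, 5, 3, 2, 1, 4, 3, 4, 2, 5, 2, 3, 4, 5, 5, 4, 3, 0, 5, 0],
   [5, 2, 5, 2, 3, 4, 3, 2, 1, 0, 3, 2, 3, 0, 3, 0, 1, 2, 3, 2, 1, 0, 3, 2, 5, 2, 5, 2, 3, 4, 1, 0, 5, 4, 1, 0],
   [5, 5, 3, 1, 5, 1, 0, 0, 2, 4, 0, 0, 1, 1, 5, 3, 1, 3, 4, 4, 0, 2, 4, 4, 1, 1, 5, 3, 1, 3, 0, 0, 2, 4, 0, 0],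
   [4, 2, 2, 0, 4, 2, 4, 4, 4, 0, 2, 4, 2, 0, 0, 4, 2, 0, 4, 4, 4, 0, 2, 4, 4, 2, 2, 0, 4, 2, 2, 2, 2, 4, 0, 2],
   [5, 1, 5, 5, 3, 1, 2, 2, 2, 2, 4, 0, 5, 1, 5, 5, 3, 1, 4, 4, 4, 4, 0, 2, 3, 5, 3, 3, 1, 5, 4, 4, 4, 4, 0, 2],
   [4, 2, 4, 2, 2, 0, 4, 0, 0, 0, 0, 2, 0, 4, 0, 4, 4, 2, 2, 4, 4, 4, 4, 0, 0, 4, 0, 4, 4, 2, 4, 0, 0, 0, 0, 2],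
   [3, 1, 5, 1, 5, 5, 0, 2, 4, 4, 4, 4, 1, 5, 3, 5, 3, 3, 0, 2, 4, 4, 4, 4, 3, 1, 5, 1, 5, 5, 4, 0, 2, 2, 2, 2],
   [2, 0, 4, 2, 4, 2, 2, 4, 0, 2, 2, 2, 2, 0, 4, 2, 4, 2, 4, 0, 2, 4, 4, 4, 0, 4, 2, 0, 2, 0, 4, 0, 2, 4, 4, 4],
   [0, 5, 0, 1, 2, 1, 1, 0, 3, 0, 3, 4, 4, 3, 4, 5, 0, 5, 1, 0, 3, 0, 3, 4, 0, 5, 0, 1, 2, 1, 5, 4, 1, 4, 1, 2],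
   [5, 4, 3, 4, 5, 0, 3, 0, 5, 2, 5, 2, 5, 4, 3, 4, 5, 0, 5, 2, 1, 4, 1, 4, 3, 2, 1, 2, 3, 4, 5, 2, 1, 4, 1, 4],
   [4, 3, 2, 1, 2, 3, 1, 2, 5, 4, 1, 4, 0, 5, 4, 3, 4, 5, 5, 0, 3, 2, 5, 2, 0, 5, 4, 3, 4, 5, 1, 2, 5, 4, 1, 4],
   [1, 2, 1, 0, 5, 0, 3, 0, 1, 4, 3, 0, 5, 0, 5, 4, 3, 4, 3, 0, 1, 4, 3, 0, 1, 2, 1, 0, 5, 0, 1, 4, 5, 2, 1, 4],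
   [4, 5, 0, 5, 4, 3, 5, 2, 5, 0, 3, 2, 4, 5, 0, 5, 4, 3, 1, 4, 1, 2, 5, 4, 2, 3, 4, 3, 2, 1, 1, 4, 1, 2, 5, 4],
   [1, 2, 3, 4, 3, 2, 1, 4, 1, 4, 5, 2, 3, 4, 5, 0, 5, 4, 5, 2, 5, 2, 3, 0, 3, 4, 5, 0, 5, 4, 1, 4, 1, 4, 5, 2],
   [1, 5, 1, 3, 5, 5, 4, 2, 2, 2, 2, 0, 1, 5, 1, 3, 5, 5, 0, 4, 4, 4, 4, 2, 5, 3, 5, 1, 3, 3, 0, 4, 4, 4, 4, 2],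
   [4, 0, 4, 0, 2, 4, 0, 4, 2, 2, 2, 2, 0, 2, 0, 2, 4, 0, 4, 2, 0, 0, 0, 0, 0, 2, 0, 2, 4, 0, 0, 4, 2, 2, 2, 2],
   [3, 3, 5, 3, 5, 1, 2, 0, 4, 2, 2, 2, 1, 1, 3, 1, 3, 5, 2, 0, 4, 2, 2, 2, 3, 3, 5, 3, 5, 1, 0, 4, 2, 0, 0, 0],
   [0, 2, 2, 4, 2, 4, 2, 2, 0, 4, 2, 2, 0, 2, 2, 4, 2, 4, 4, 4, 2, 0, 4, 4, 4, 0, 0, 2, 0, 2, 4, 4, 2, 0, 4, 4],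
   [3, 5, 1, 1, 3, 1, 2, 2, 2, 0, 4, 2, 5, 1, 3, 3, 5, 3, 0, 0, 0, 4, 2, 0, 5, 1, 3, 3, 5, 3, 2, 2, 2, 0, 4, 2],
   [0, 2, 4, 0, 0, 2, 2, 2, 2, 2, 0, 4, 4, 0, 2, 4, 4, 0, 2, 2, 2, 2, 0, 4, 0, 2, 4, 0, 0, 2, 0, 0, 0, 0, 4, 2]]

def Efun (p q : Fin 6 × Fin 6) : ℕ := (Etab.getD (idx p) []).getD (idx q) 0

def g3 (x : Fin 6 × Fin 6) : ℕ :=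
  ([0,2,2,0,0,1,0,1,1,1,2,1,0,2,0,2,2,2,2,0,2,2,2,1,1,1,2,0,2,2,0,1,2,2,1,0] :
    List ℕ).getD (idx x) 0

def eExp (p x q : Fin 6 × Fin 6) : ℕ :=
  (p.1.val + x.1.val) * ((p.2 - x.2 : Fin 6)).val + 2 * g3 x
    + (x.1.val + 5 * q.1.val) * ((x.2 - q.2 : Fin 6)).val

def fM (p q : Fin 6 × Fin 6) : Zz := ∑ x : Fin 6 × Fin 6, zp (eExp p x q)

def smul6 (x : Zz) : Zz := ⟨6 * x.a, 6 * x.b⟩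

lemma phi_smul6 (x : Zz) : phi (smul6 x) = 6 * phi x := by
  simp only [phi, smul6]; push_cast; ring

set_option maxHeartbeats 4000000 in
set_option maxRecDepth 100000 in
theorem hM : ∀ p q : Fin 6 × Fin 6, fM p q = smul6 (zp (Efun p q)) := by decide

def patN (r : Fin 6 × Fin 6) : ℕ :=
  ([0,1,0,0,1,0, 0,0,1,0,0,1, 1,0,0,1,0,0, 0,1,0,0,1,0, 0,0,1,0,0,1, 1,0,0,1,0,0] :
    List ℕ).getD (idx r) 0

def inD (p : Fin 6 × Fin 6) : Prop := idx p = 1 ∨ idx p = 13 ∨ idx p = 25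
instance : DecidablePred inD := fun p => by unfold inD; infer_instance

def Sg0 (p q : Fin 6 × Fin 6) : Zz :=
  ∑ r ∈ Finset.univ.filter (fun r => patN r = 0), zp (Efun p r + 5 * Efun q r)
def Sg1 (p q : Fin 6 × Fin 6) : Zz :=
  ∑ r ∈ Finset.univ.filter (fun r => ¬ patN r = 0), zp (Efun p r + 5 * Efun q r)

set_option maxHeartbeats 4000000 in
set_option maxRecDepth 100000 in
theorem hGram : ∀ p q : Fin 6 × Fin 6,
    (if p = q then Sg0 p q + Sg1 p q = ⟨36, 0⟩
     else if inD p ↔ inD q then Sg0 p q + Sg1 p q = ⟨0, 0⟩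
     else Sg0 p q = ⟨0, 0⟩ ∧ Sg1 p q = ⟨0, 0⟩) := by decide

/-! ### Closed form of the entries of the matrices -/

lemma F6_apply (j k : Fin 6) : F6 j k = zeta ^ (j.val * k.val) / (Real.sqrt 6 : ℂ) := by
  rw [F6, zeta, ← Complex.exp_nat_mul]
  congr 1
  push_cast
  ring

lemma F6H_apply (w l : Fin 6) :
    F6ᴴ w l = zeta ^ (5 * (l.val * w.val)) / (Real.sqrt 6 : ℂ) := by
  rw [Matrix.conjTranspose_apply, F6_apply, Complex.star_def, map_div₀, map_pow, conj_zeta,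
    ← pow_mul, Complex.conj_ofReal]

open Fin.NatCast Fin.CommRing in
lemma Xshift_pow (n : ℕ) (k m : Fin 6) :
    (Xshift ^ n) k m = if k = m + (n : Fin 6) then 1 else 0 := by
  induction n generalizing m with
  | zero => simp [Matrix.one_apply]
  | succ n ih =>
    rw [pow_succ, Matrix.mul_apply]
    simp only [ih, Xshift]
    rw [Finset.sum_eq_single (m + 1)]
    · push_cast
      simp only [if_true, mul_one]
      congr 1
      rw [eq_iff_iff]
      constructor <;> intro h <;> rw [h] <;> ring
    · intro t _ ht
      simp [ht]
    · simp

open Fin.NatCast Fin.CommRing in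
lemma Pcnot_apply (x y : Fin 6 × Fin 6) :
    Pcnot x y = if x.1 = y.1 ∧ x.2 = y.2 + x.1 then 1 else 0 := by
  rw [Pcnot, Xshift_pow]
  simp [Fin.cast_val_eq_self]
  split_ifs with h1 h2 h3 <;> simp_all

lemma KP_apply (j k : Fin 6) (y : Fin 6 × Fin 6) :
    (kron F6 1 * Pcnot) (j,k) y = F6 j y.1 * (if k = y.2 + y.1 then 1 else 0) := by
  rw [Matrix.mul_apply, Fintype.sum_prod_type]
  simp only [kron, Pcnot_apply, Matrix.one_apply]
  rw [Finset.sum_eq_single y.1]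
  · rw [Finset.sum_eq_single k] <;> simp +contextual [eq_comm]
  · intro t _ ht
    simp [ht]
  · simp

lemma sqrt6_mul_self : ((Real.sqrt 6 : ℝ) : ℂ) * ((Real.sqrt 6 : ℝ) : ℂ) = 6 := by
  rw [← Complex.ofReal_mul, Real.mul_self_sqrt (by norm_num : (0:ℝ) ≤ 6)]
  norm_num

open Fin.NatCast Fin.CommRing in
lemma Kmat_apply (p q : Fin 6 × Fin 6) :
    Kmat p q = zeta ^ ((p.1.val + q.1.val) * ((p.2 - q.2 : Fin 6)).val) / 6 := by
  obtain ⟨j, k⟩ := p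
  obtain ⟨l, m⟩ := q
  rw [Kmat, Matrix.mul_apply]
  simp only [KP_apply]
  rw [Fintype.sum_prod_type]
  simp only [kron, Matrix.one_apply]
  rw [Finset.sum_eq_single (k - m)]
  · rw [Finset.sum_eq_single m]
    · rw [if_pos (by ring : k = m + (k - m)), if_pos (rfl : m = m), mul_one, mul_one,
        F6_apply, F6_apply, div_mul_div_comm, ← pow_add, sqrt6_mul_self]
      congr 2
      ring
    · intro t _ ht; simp [ht]
    · simp
  · intro t _ ht
    have hne : ¬ (k = m + t) := by
      intro h; exact ht (by rw [h]; ring)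
    simp [hne]
  · simp

open Fin.NatCast Fin.CommRing in
lemma Lmat_apply (p q : Fin 6 × Fin 6) :
    Lmat p q = zeta ^ ((p.1.val + 5 * q.1.val) * ((p.2 - q.2 : Fin 6)).val) / 6 := by
  obtain ⟨j, k⟩ := p
  obtain ⟨l, m⟩ := q
  rw [Lmat, Matrix.mul_apply]
  simp only [KP_apply]
  rw [Fintype.sum_prod_type]
  have hk : ∀ y1 y2 : Fin 6, kron F6ᴴ 1 (y1, y2) (l, m)
      = F6ᴴ y1 l * (if y2 = m then 1 else 0) := by
    intro y1 y2
    simp [kron, Matrix.one_apply]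
  simp only [hk]
  rw [Finset.sum_eq_single (k - m)]
  · rw [Finset.sum_eq_single m]
    · rw [if_pos (by ring : k = m + (k - m)), if_pos (rfl : m = m), mul_one, mul_one,
        F6_apply, F6H_apply, div_mul_div_comm, ← pow_add, sqrt6_mul_self]
      congr 2
      ring
    · intro t _ ht; simp [ht]
    · simp
  · intro t _ ht
    have hne : ¬ (k = m + t) := by
      intro h; exact ht (by rw [h]; ring)
    simp [hne]
  · simp

lemma Lambda3_eq (x : Fin 6 × Fin 6) : Λ₃ x = (g3 x : ℝ) / 3 := by
  fin_cases x <;> norm_num [Λ₃, g3, idx]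

lemma diagE_apply (x : Fin 6 × Fin 6) :
    Complex.exp (2 * (Real.pi : ℂ) * Complex.I * ((Λ₃ x : ℝ) : ℂ)) = zeta ^ (2 * g3 x) := by
  rw [Lambda3_eq, zeta, ← Complex.exp_nat_mul]
  congr 1
  push_cast
  ring

/-- The key closed form: every entry of `𝒰₃` is `ζ^e/6`. -/
lemma Umat_apply (p q : Fin 6 × Fin 6) : Umat Λ₃ p q = zeta ^ (Efun p q) / 6 := by
  rw [Umat, Matrix.mul_apply]
  simp only [Matrix.mul_diagonal]
  have hterm : ∀ x : Fin 6 × Fin 6,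
      Kmat p x * Complex.exp (2 * (Real.pi : ℂ) * Complex.I * ((Λ₃ x : ℝ) : ℂ)) * Lmat x q
        = phi (zp (eExp p x q)) / 36 := by
    intro x
    rw [Kmat_apply, Lmat_apply, diagE_apply, phi_zp, eExp, pow_add, pow_add]
    ring
  rw [Finset.sum_congr rfl (fun x _ => hterm x), ← Finset.sum_div, ← phi_sum]
  have hfm : (∑ x : Fin 6 × Fin 6, zp (eExp p x q)) = fM p q := rfl
  rw [hfm, hM p q, phi_smul6, phi_zp]
  ring

lemma abs_exp_I_real (r : ℝ) : ‖Complex.exp (Complex.I * (r : ℂ))‖ = 1 := by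
  rw [Complex.norm_exp]
  simp [Complex.mul_re]

lemma patRow_eq (r : Fin 6 × Fin 6) : patRow.getD (idx r) 0 = (patN r : ℝ) := by
  fin_cases r <;> norm_num [patRow, patN, idx]

lemma patN_cases (r : Fin 6 × Fin 6) : patN r = 0 ∨ patN r = 1 := by revert r; decide

lemma exp_mul_star_exp (x : ℝ) :
    Complex.exp (Complex.I * (x : ℂ)) * star (Complex.exp (Complex.I * (x : ℂ))) = 1 := by
  rw [Complex.star_def, ← Complex.exp_conj, ← Complex.exp_add]
  rw [_root_.map_mul, Complex.conj_I, Complex.conj_ofReal]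
  ring_nf
  exact Complex.exp_zero

/-- Generic lemma for the cross (deformed vs undeformed) inner products. -/
lemma cross_sum (p q : Fin 6 × Fin 6) (h0 : Sg0 p q = ⟨0,0⟩) (h1 : Sg1 p q = ⟨0,0⟩)
    (w : ℂ) (f : Fin 6 × Fin 6 → ℂ)
    (hf0 : ∀ r, patN r = 0 → f r = 1) (hf1 : ∀ r, patN r = 1 → f r = w) :
    (∑ r : Fin 6 × Fin 6, zeta ^ (Efun p r + 5 * Efun q r) * f r) = 0 := by
  rw [← Finset.sum_filter_add_sum_filter_not Finset.univ (fun r => patN r = 0)]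
  have e0 : (∑ r ∈ Finset.univ.filter (fun r => patN r = 0),
      zeta ^ (Efun p r + 5 * Efun q r) * f r)
      = phi (Sg0 p q) := by
    rw [Sg0, phi_sum]
    refine Finset.sum_congr rfl (fun r hr => ?_)
    rw [hf0 r (Finset.mem_filter.mp hr).2, mul_one, phi_zp]
  have e1 : (∑ r ∈ Finset.univ.filter (fun r => ¬ patN r = 0),
      zeta ^ (Efun p r + 5 * Efun q r) * f r)
      = phi (Sg1 p q) * w := by
    rw [Sg1, phi_sum, Finset.sum_mul]
    refine Finset.sum_congr rfl (fun r hr => ?_)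
    have h1' : patN r = 1 := by
      have hx := (Finset.mem_filter.mp hr).2
      rcases patN_cases r with h | h
      · exact absurd h hx
      · exact h
    rw [hf1 r h1', phi_zp]
  rw [e0, e1, h0, h1]
  simp [phi]

/-- Same-pattern inner products. -/
lemma same_sum (p q : Fin 6 × Fin 6) :
    (∑ r : Fin 6 × Fin 6, zeta ^ (Efun p r + 5 * Efun q r)) = phi (Sg0 p q + Sg1 p q) := by
  rw [phi_add]
  rw [Sg0, Sg1, phi_sum, phi_sum]
  simp only [phi_zp]
  rw [Finset.sum_filter_add_sum_filter_not]

/-- For every `a ∈ ℝ`, the matrix `6·𝒰₃(a)` is a complex Hadamard matrix of order 36: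
all its entries have modulus one and `H·Hᴴ = 36·I`. Thus `𝒰₃` admits a one-parameter
affine family of complex Hadamard matrices. -/
theorem U3_one_parameter_affine_family_CHM (a : ℝ) :
    (∀ p q, ‖(6 : ℂ) * U3fam a p q‖ = 1) ∧
    ((6 : ℂ) • U3fam a) * ((6 : ℂ) • U3fam a)ᴴ =
      (36 : ℂ) • (1 : Matrix (Fin 6 × Fin 6) (Fin 6 × Fin 6) ℂ) := by
  have hE : ∀ p r : Fin 6 × Fin 6, (6 : ℂ) * U3fam a p r
      = zeta ^ Efun p r * Complex.exp (Complex.I * ((Rmat a p r : ℝ) : ℂ)) := by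
    intro p r
    rw [U3fam, Umat_apply]
    ring
  have hR : ∀ p' r, (Rmat a p' r : ℝ)
      = if idx p' = 1 ∨ idx p' = 13 ∨ idx p' = 25 then a * (patN r : ℝ) else 0 := by
    intro p' r
    rw [Rmat, patRow_eq]
  constructor
  · intro p q
    rw [hE, norm_mul, norm_pow, abs_zeta, one_pow, one_mul, abs_exp_I_real]
  · ext p q
    rw [Matrix.mul_apply]
    simp only [Matrix.conjTranspose_apply, Matrix.smul_apply, smul_eq_mul, Matrix.one_apply,
      mul_ite, mul_one, mul_zero]
    have hterm : ∀ r, (6 * U3fam a p r) * star (6 * U3fam a q r)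
        = zeta ^ (Efun p r + 5 * Efun q r) *
          (Complex.exp (Complex.I * ((Rmat a p r : ℝ) : ℂ)) *
            star (Complex.exp (Complex.I * ((Rmat a q r : ℝ) : ℂ)))) := by
      intro r
      rw [hE, hE, star_mul', star_pow, Complex.star_def, conj_zeta, ← pow_mul, pow_add]
      ring
    simp only [hterm]
    have hg := hGram p q
    by_cases hpq : p = q
    · rw [if_pos hpq] at hg ⊢
      subst hpq
      have h1 : ∀ r : Fin 6 × Fin 6, Complex.exp (Complex.I * ((Rmat a p r : ℝ) : ℂ)) *
          star (Complex.exp (Complex.I * ((Rmat a p r : ℝ) : ℂ))) = 1 := fun r =>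
        exp_mul_star_exp _
      simp only [h1, mul_one]
      rw [same_sum, hg]
      norm_num [phi]
    · rw [if_neg hpq] at hg ⊢
      by_cases hp : idx p = 1 ∨ idx p = 13 ∨ idx p = 25
      · by_cases hq : idx q = 1 ∨ idx q = 13 ∨ idx q = 25
        · -- both deformed
          have hiff : inD p ↔ inD q := ⟨fun _ => hq, fun _ => hp⟩
          rw [if_pos hiff] at hg
          have h1 : ∀ r : Fin 6 × Fin 6, Complex.exp (Complex.I * ((Rmat a p r : ℝ) : ℂ)) *
              star (Complex.exp (Complex.I * ((Rmat a q r : ℝ) : ℂ))) = 1 := by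
            intro r
            have hRe : (Rmat a p r : ℝ) = (Rmat a q r : ℝ) := by
              rw [hR, hR, if_pos hp, if_pos hq]
            rw [hRe, exp_mul_star_exp]
          simp only [h1, mul_one]
          rw [same_sum, hg]
          simp [phi]
        · -- p deformed, q not
          have hiff : ¬ (inD p ↔ inD q) := fun h => hq (h.mp hp)
          rw [if_neg hiff] at hg
          refine cross_sum p q hg.1 hg.2 (Complex.exp (Complex.I * ((a : ℝ) : ℂ))) _ ?_ ?_ <;>
            intro r hr
          · have hRp : (Rmat a p r : ℝ) = 0 := by rw [hR, if_pos hp, hr]; norm_num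
            have hRq : (Rmat a q r : ℝ) = 0 := by rw [hR, if_neg hq]
            rw [hRp, hRq, exp_mul_star_exp]
          · have hRp : (Rmat a p r : ℝ) = a := by rw [hR, if_pos hp, hr]; norm_num
            have hRq : (Rmat a q r : ℝ) = 0 := by rw [hR, if_neg hq]
            rw [hRp, hRq]
            norm_num
      · by_cases hq : idx q = 1 ∨ idx q = 13 ∨ idx q = 25
        · -- q deformed, p not
          have hiff : ¬ (inD p ↔ inD q) := fun h => hp (h.mpr hq)
          rw [if_neg hiff] at hg
          refine cross_sum p q hg.1 hg.2
            (star (Complex.exp (Complex.I * ((a : ℝ) : ℂ)))) _ ?_ ?_ <;> intro r hr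
          · have hRp : (Rmat a p r : ℝ) = 0 := by rw [hR, if_neg hp]
            have hRq : (Rmat a q r : ℝ) = 0 := by rw [hR, if_pos hq, hr]; norm_num
            rw [hRp, hRq, exp_mul_star_exp]
          · have hRp : (Rmat a p r : ℝ) = 0 := by rw [hR, if_neg hp]
            have hRq : (Rmat a q r : ℝ) = a := by rw [hR, if_pos hq, hr]; norm_num
            rw [hRp, hRq]
            norm_num
        · -- neither deformed
          have hiff : inD p ↔ inD q := by
            constructor <;> intro h <;> exact absurd h (by assumption)
          rw [if_pos hiff] at hg
          have h1 : ∀ r : Fin 6 × Fin 6, Complex.exp (Complex.I * ((Rmat a p r : ℝ) : ℂ)) *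
              star (Complex.exp (Complex.I * ((Rmat a q r : ℝ) : ℂ))) = 1 := by
            intro r
            have hRe : (Rmat a p r : ℝ) = (Rmat a q r : ℝ) := by
              rw [hR, hR, if_neg hp, if_neg hq]
            rw [hRe, exp_mul_star_exp]
          simp only [h1, mul_one]
          rw [same_sum, hg]
          simp [phi]
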